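/- Suppose ψ : ℝ → ℂ^N is twice differentiable, H : ℝ → Matrix (Fin N) (Fin N) ℂ is differentiable, ψ''(t) = -(i·H'(t) + H(t)²)·ψ(t) for all t, and the initial condition ψ'(0) = -i·H(0)·ψ(0) holds. Then ψ'(t) = -i·H(t)·ψ(t) for all t ≥ 0. -/

import Mathlib

/-!
The defect `T = ψ' + i H ψ` of the first-order equation satisfies the linear equation
`T' = i H T`: differentiating, `ψ'' + i H' ψ + i H ψ' = -H² ψ + i H ψ' = i H (ψ' + i H ψ)`.
Since `T 0 = 0` and `i H` is bounded on compact intervals, Grönwall's inequality forces `T = 0`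
for `t ≥ 0`.
-/

open Set Matrix

theorem Matrix.hasDerivAt_mulVec {𝕜 𝔸 : Type*} [NontriviallyNormedField 𝕜] [NormedCommRing 𝔸]
    [NormedAlgebra 𝕜 𝔸] {m n : Type*} [Fintype m] [Fintype n]
    {A : 𝕜 → Matrix m n 𝔸} {A' : Matrix m n 𝔸} {v : 𝕜 → n → 𝔸} {v' : n → 𝔸} {t : 𝕜}
    (hA : ∀ i j, HasDerivAt (fun s => A s i j) (A' i j) t) (hv : HasDerivAt v v' t) :
    HasDerivAt (fun s => A s *ᵥ v s) (A' *ᵥ v t + A t *ᵥ v') t := by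
  refine hasDerivAt_pi.2 fun i => ?_
  simp only [Pi.add_apply, mulVec, dotProduct, ← Finset.sum_add_distrib]
  exact HasDerivAt.fun_sum fun j _ => (hA i j).mul (hasDerivAt_pi.1 hv j)

section

attribute [local instance] Matrix.linftyOpNormedAddCommGroup

theorem eq_zero_of_hasDerivAt_mulVec {𝕜 : Type*} [NontriviallyNormedField 𝕜] [NormedSpace ℝ 𝕜]
    {n : Type*} [Fintype n] {A : ℝ → Matrix n n 𝕜} (hA : Continuous A) {T : ℝ → n → 𝕜} {a : ℝ}
    (hT : ∀ t, HasDerivAt T (A t *ᵥ T t) t) (ha : T a = 0) :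
    ∀ t ≥ a, T t = 0 := by
  intro b hb
  obtain ⟨K, hK⟩ := isCompact_Icc.exists_bound_of_continuousOn (hA.continuousOn (s := Icc a b))
  refine eq_zero_of_abs_deriv_le_mul_abs_self_of_eq_zero_right (K := K)
    (fun t _ => (hT t).continuousAt.continuousWithinAt) (fun t _ => (hT t).hasDerivWithinAt) ha
    (fun t ht => ?_) b ⟨hb, le_rfl⟩
  exact (linfty_opNorm_mulVec _ _).trans
    (mul_le_mul_of_nonneg_right (hK t (Ico_subset_Icc_self ht)) (norm_nonneg _))

end

theorem stmt_4 {N : ℕ} (H H' : ℝ → Matrix (Fin N) (Fin N) ℂ)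
    (ψ ψ' ψ'' : ℝ → Fin N → ℂ)
    (hH : ∀ t i j, HasDerivAt (fun s => H s i j) (H' t i j) t)
    (hψ : ∀ t, HasDerivAt ψ (ψ' t) t)
    (hψ' : ∀ t, HasDerivAt ψ' (ψ'' t) t)
    (heq : ∀ t, ψ'' t = -((Complex.I • H' t + H t ^ 2).mulVec (ψ t)))
    (hinit : ψ' 0 = -(Complex.I • (H 0).mulVec (ψ 0))) :
    ∀ t ≥ (0 : ℝ), ψ' t = -(Complex.I • (H t).mulVec (ψ t)) := by
  set T : ℝ → Fin N → ℂ := fun t => ψ' t + Complex.I • H t *ᵥ ψ t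
  have hT : ∀ t, HasDerivAt T ((Complex.I • H t) *ᵥ T t) t := fun t =>
    ((hψ' t).add ((hasDerivAt_mulVec (hH t) (hψ t)).const_smul Complex.I)).congr_deriv (by
      simp only [T, heq, add_mulVec, smul_mulVec, pow_two, ← mulVec_mulVec, mulVec_add,
        mulVec_smul, smul_add, smul_smul, Complex.I_mul_I, neg_one_smul]
      abel)
  have hHc : Continuous H :=
    continuous_pi fun i => continuous_pi fun j =>
      continuous_iff_continuousAt.2 fun t => (hH t i j).continuousAt
  have hA : Continuous fun t => Complex.I • H t := hHc.const_smul Complex.I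
  have hT0 : T 0 = 0 := by simp [T, hinit]
  exact fun t ht => add_eq_zero_iff_eq_neg.1 (eq_zero_of_hasDerivAt_mulVec hA hT hT0 t ht)
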